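/- For each a, z ∈ ℝ let p(a,z) = 1/(1 + e^{−az}). Then p(a,z) + p(a,−z) = 1, and the modified Barker density q̌(x, x+z) := μ_σ(z)·p(a,z) + μ_σ(−z)·(1 − p(a,−z)) equals 2·p(a,z)·μ_σ(z) ≤ 2·μ_σ(z) for any symmetric density μ_σ. Consequently, if P^R and P̌^B are the Metropolis–Hastings kernels with the same target π and proposal densities μ_σ(y−x) and q̌(x,y) respectively, then Gap(P^R) ≥ Gap(P̌^B)/2. -/
import Mathlib


open MeasureTheory ENNReal Real

/-- Spectral gap of the Metropolis–Hastings chain with target density `pi` and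
proposal density `q`, as an infimum of Dirichlet forms over mean-zero
variance-one test functions. -/
noncomputable def mhGap (pi : ℝ → ℝ) (q : ℝ → ℝ → ℝ) : ℝ≥0∞ :=
  ⨅ f ∈ {f : ℝ → ℝ | Measurable f ∧ (∫ x, f x * pi x) = 0 ∧
      (∫ x, (f x)^2 * pi x) = 1},
    (1/2 : ℝ≥0∞) * ∫⁻ x, ∫⁻ y,
      ENNReal.ofReal ((f y - f x)^2 * min (pi x * q x y) (pi y * q y x))

/-- Properties of the modified (global-flip) Barker proposal: the flip
probabilities `p(a,z) = 1/(1+e^{−az})` satisfy `p(a,z) + p(a,−z) = 1`; the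
modified Barker proposal density equals `2·p(a,z)·μ_σ(z) ≤ 2·μ_σ(z)`; and
consequently the random-walk Metropolis gap dominates half of the modified
Barker gap. -/
theorem modified_barker_gap_bound
    (μσ : ℝ → ℝ) (hμ_nonneg : ∀ z, 0 ≤ μσ z) (hμ_symm : ∀ z, μσ z = μσ (-z))
    (pi : ℝ → ℝ) (hpi : ∀ x, 0 ≤ pi x)
    (G : ℝ → ℝ)  -- G x = ∇ log π (x)
    (p : ℝ → ℝ → ℝ) (hp : ∀ a z, p a z = 1 / (1 + Real.exp (-a * z)))
    (qcheck : ℝ → ℝ → ℝ)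
    (hqcheck : ∀ x z, qcheck x (x + z) =
      μσ z * p (G x) z + μσ (-z) * (1 - p (G x) (-z))) :
    (∀ a z, p a z + p a (-z) = 1) ∧
    (∀ x z, qcheck x (x + z) = 2 * p (G x) z * μσ z ∧
      qcheck x (x + z) ≤ 2 * μσ z) ∧
    mhGap pi (fun x y => μσ (y - x)) ≥ mhGap pi qcheck / 2 := by
  have hpsum : ∀ a z, p a z + p a (-z) = 1 := by
    intro a z
    rw [hp, hp]
    have hz : -a * -z = a * z := by ring
    rw [hz]
    have h1 : (0:ℝ) < 1 + Real.exp (-a * z) := by positivity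
    have h2 : (0:ℝ) < 1 + Real.exp (a * z) := by positivity
    have hmul : Real.exp (-(a * z)) * Real.exp (a * z) = 1 := by
      rw [← Real.exp_add, neg_add_cancel, Real.exp_zero]
    field_simp
    nlinarith [hmul]
  have hple : ∀ a z, p a z ≤ 1 := by
    intro a z
    rw [hp]
    rw [div_le_one (by positivity)]
    nlinarith [Real.exp_pos (-a * z)]
  have hq : ∀ x z, qcheck x (x + z) = 2 * p (G x) z * μσ z ∧
      qcheck x (x + z) ≤ 2 * μσ z := by
    intro x z
    have heq : qcheck x (x + z) = 2 * p (G x) z * μσ z := by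
      rw [hqcheck, ← hμ_symm]
      have := hpsum (G x) z
      have h1 : 1 - p (G x) (-z) = p (G x) z := by linarith
      rw [h1]; ring
    refine ⟨heq, ?_⟩
    rw [heq]
    have := hple (G x) z
    nlinarith [hμ_nonneg z]
  refine ⟨hpsum, hq, ?_⟩
  -- gap comparison
  have hqle : ∀ x y, qcheck x y ≤ 2 * μσ (y - x) := by
    intro x y
    have := (hq x (y - x)).2
    rwa [add_sub_cancel] at this
  have hmin : ∀ (f : ℝ → ℝ) x y,
      (f y - f x)^2 * min (pi x * qcheck x y) (pi y * qcheck y x)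
        ≤ 2 * ((f y - f x)^2 * min (pi x * μσ (y - x)) (pi y * μσ (x - y))) := by
    intro f x y
    have h1 : min (pi x * qcheck x y) (pi y * qcheck y x)
        ≤ 2 * min (pi x * μσ (y - x)) (pi y * μσ (x - y)) := by
      rcases le_total (pi x * μσ (y - x)) (pi y * μσ (x - y)) with h | h
      · calc min (pi x * qcheck x y) (pi y * qcheck y x) ≤ pi x * qcheck x y :=
              min_le_left _ _
          _ ≤ pi x * (2 * μσ (y - x)) := by
              exact mul_le_mul_of_nonneg_left (hqle x y) (hpi x)
          _ = 2 * (pi x * μσ (y - x)) := by ring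
          _ = 2 * min (pi x * μσ (y - x)) (pi y * μσ (x - y)) := by
              rw [min_eq_left h]
      · calc min (pi x * qcheck x y) (pi y * qcheck y x) ≤ pi y * qcheck y x :=
              min_le_right _ _
          _ ≤ pi y * (2 * μσ (x - y)) := by
              exact mul_le_mul_of_nonneg_left (hqle y x) (hpi y)
          _ = 2 * (pi y * μσ (x - y)) := by ring
          _ = 2 * min (pi x * μσ (y - x)) (pi y * μσ (x - y)) := by
              rw [min_eq_right h]
    nlinarith [sq_nonneg (f y - f x), h1,
      mul_le_mul_of_nonneg_left h1 (sq_nonneg (f y - f x))]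
  rw [ge_iff_le, mhGap, mhGap]
  refine le_iInf₂ fun f hf => ?_
  refine le_trans (ENNReal.div_le_div_right (iInf₂_le f hf) 2) ?_
  have hI : (∫⁻ x, ∫⁻ y, ENNReal.ofReal
        ((f y - f x)^2 * min (pi x * qcheck x y) (pi y * qcheck y x)))
      ≤ 2 * ∫⁻ x, ∫⁻ y, ENNReal.ofReal
        ((f y - f x)^2 * min (pi x * μσ (y - x)) (pi y * μσ (x - y))) := by
    rw [← lintegral_const_mul' _ _ (by norm_num : (2:ℝ≥0∞) ≠ ⊤)]
    refine lintegral_mono fun x => ?_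
    rw [← lintegral_const_mul' _ _ (by norm_num : (2:ℝ≥0∞) ≠ ⊤)]
    refine lintegral_mono fun y => ?_
    calc ENNReal.ofReal ((f y - f x)^2 * min (pi x * qcheck x y) (pi y * qcheck y x))
        ≤ ENNReal.ofReal (2 * ((f y - f x)^2 *
            min (pi x * μσ (y - x)) (pi y * μσ (x - y)))) :=
          ENNReal.ofReal_le_ofReal (hmin f x y)
      _ = 2 * ENNReal.ofReal ((f y - f x)^2 *
            min (pi x * μσ (y - x)) (pi y * μσ (x - y))) := by
          rw [ENNReal.ofReal_mul (by norm_num : (0:ℝ) ≤ 2), ENNReal.ofReal_ofNat]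
  have key : ∀ I : ℝ≥0∞, ((1/2 : ℝ≥0∞) * (2 * I)) / 2 = (1/2 : ℝ≥0∞) * I := by
    intro I
    rw [← mul_assoc, one_div, ENNReal.inv_mul_cancel (by norm_num) (by norm_num),
      one_mul, ENNReal.div_eq_inv_mul]
  calc ((1/2 : ℝ≥0∞) * ∫⁻ x, ∫⁻ y, ENNReal.ofReal
        ((f y - f x)^2 * min (pi x * qcheck x y) (pi y * qcheck y x))) / 2
      ≤ ((1/2 : ℝ≥0∞) * (2 * ∫⁻ x, ∫⁻ y, ENNReal.ofReal
        ((f y - f x)^2 * min (pi x * μσ (y - x)) (pi y * μσ (x - y))))) / 2 :=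
        ENNReal.div_le_div_right (mul_le_mul_right hI _) 2
    _ = (1/2 : ℝ≥0∞) * ∫⁻ x, ∫⁻ y, ENNReal.ofReal
        ((f y - f x)^2 * min (pi x * μσ (y - x)) (pi y * μσ (x - y))) := key _
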